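/- Let K be a field of characteristic 2 and let a₂, a₀, b₆, b₄, b₀ ∈ K with b₆ ≠ 0 and (a₀, a₂) ≠ (0, 0). Then the polynomial f(X, Y) = Y² + (a₂X² + a₀)Y + b₆X⁶ + b₄X⁴ + b₀ ∈ K[X, Y] is absolutely irreducible, i.e., there is no polynomial c(X) ∈ K̄[X] with f(X, c(X)) = 0 over the algebraic closure K̄ of K. -/

import Mathlib

/-!
In characteristic 2 the derivative kills `c²`, `a₂X² + a₀` and `b₆X⁶ + b₄X⁴ + b₀`, so
differentiating the equation leaves `(a₂X² + a₀) c' = 0`. Hence `c' = 0`, and `c` has even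
degree `d`. Then `c² + (a₂X² + a₀) c` would have to have degree 6, but it has degree
`2d ≡ 0 mod 4` when `d > 2` and degree at most 4 otherwise.
-/

open Polynomial

namespace Polynomial

theorem dvd_natDegree_of_derivative_eq_zero {R : Type*} [CommSemiring R] [NoZeroDivisors R]
    {p : ℕ} [ExpChar R p] {f : R[X]} (hf : derivative f = 0) : p ∣ f.natDegree := by
  rw [← expand_contract' p hf, natDegree_expand]
  exact dvd_mul_left _ _

variable {R : Type*} [CommRing R] [IsDomain R] {c u g : R[X]}

theorem natDegree_sq_add_mul_of_natDegree_lt (h : u.natDegree < c.natDegree) :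
    (c ^ 2 + u * c).natDegree = 2 * c.natDegree := by
  have hsq : (c ^ 2).natDegree = 2 * c.natDegree := by rw [natDegree_pow, mul_comm]
  rw [natDegree_add_eq_left_of_natDegree_lt, hsq]
  calc (u * c).natDegree ≤ u.natDegree + c.natDegree := natDegree_mul_le
    _ < (c ^ 2).natDegree := by omega

theorem natDegree_sq_add_mul_le_of_natDegree_le (h : c.natDegree ≤ u.natDegree) :
    (c ^ 2 + u * c).natDegree ≤ 2 * u.natDegree := by
  refine natDegree_add_le_of_degree_le ?_ ?_
  · rw [natDegree_pow]
    omega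
  · calc (u * c).natDegree ≤ u.natDegree + c.natDegree := natDegree_mul_le
      _ ≤ 2 * u.natDegree := by omega

theorem derivative_eq_zero_of_sq_add_mul_add_eq_zero [CharP R 2] (h : c ^ 2 + u * c + g = 0)
    (hu : u ≠ 0) (hu' : derivative u = 0) (hg' : derivative g = 0) : derivative c = 0 := by
  have h' := congrArg derivative h
  simp only [derivative_add, derivative_sq, derivative_mul, hu', hg', CharTwo.two_eq_zero,
    map_zero, zero_mul, add_zero, zero_add] at h'
  exact (mul_eq_zero.mp h').resolve_left hu

theorem sq_add_mul_add_ne_zero [CharP R 2] {m : ℕ} (hm : Odd m) (hg : g.natDegree = 2 * m)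
    (hu : u.natDegree < m) (hu0 : u ≠ 0) (hu' : derivative u = 0) (hg' : derivative g = 0) :
    c ^ 2 + u * c + g ≠ 0 := by
  intro h
  have hc : 2 ∣ c.natDegree := dvd_natDegree_of_derivative_eq_zero
    (derivative_eq_zero_of_sq_add_mul_add_eq_zero h hu0 hu' hg')
  have hdeg : (c ^ 2 + u * c).natDegree = 2 * m := by
    rw [eq_neg_of_add_eq_zero_left h, natDegree_neg, hg]
  rcases lt_or_ge u.natDegree c.natDegree with hlt | hle
  · rw [natDegree_sq_add_mul_of_natDegree_lt hlt] at hdeg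
    obtain ⟨k, rfl⟩ := hm
    omega
  · have := natDegree_sq_add_mul_le_of_natDegree_le hle
    omega

end Polynomial

/-- Let `K` be a field of characteristic 2 and `a₂ a₀ b₆ b₄ b₀ ∈ K` with
`b₆ ≠ 0` and `(a₀, a₂) ≠ (0, 0)`. Then `f(X,Y) = Y² + (a₂X² + a₀)Y + b₆X⁶ + b₄X⁴ + b₀`
is absolutely irreducible: there is no polynomial `c(X)` over the algebraic closure `K̄`
of `K` with `f(X, c(X)) = 0`. -/
theorem stmt9 (K : Type) [Field K] (hchar : ringChar K = 2)
    (a₂ a₀ b₆ b₄ b₀ : K) (hb : b₆ ≠ 0) (ha : ¬ (a₀ = 0 ∧ a₂ = 0)) :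
    ¬ ∃ c : Polynomial (AlgebraicClosure K),
      c ^ 2
        + (Polynomial.C (algebraMap K (AlgebraicClosure K) a₂) * Polynomial.X ^ 2
            + Polynomial.C (algebraMap K (AlgebraicClosure K) a₀)) * c
        + (Polynomial.C (algebraMap K (AlgebraicClosure K) b₆) * Polynomial.X ^ 6
            + Polynomial.C (algebraMap K (AlgebraicClosure K) b₄) * Polynomial.X ^ 4
            + Polynomial.C (algebraMap K (AlgebraicClosure K) b₀)) = 0 := by
  have : CharP K 2 := hchar ▸ ringChar.charP K
  have : CharP (AlgebraicClosure K) 2 :=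
    charP_of_injective_algebraMap (algebraMap K _).injective 2
  rintro ⟨c, hc⟩
  refine sq_add_mul_add_ne_zero (m := 3) (by decide) ?_ ?_ ?_ ?_ ?_ hc
  · compute_degree!
  · compute_degree!
  · contrapose! ha
    have h₀ := congrArg (coeff · 0) ha
    have h₂ := congrArg (coeff · 2) ha
    simp only [coeff_add, coeff_C_mul_X_pow, coeff_C, coeff_zero] at h₀ h₂
    simp_all
  all_goals
    simp only [derivative_add, derivative_C_mul_X_pow, derivative_C, CharTwo.natCast_eq_ite]
    simp [Nat.even_iff]
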